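/- arXiv:2109.02319 — 2 statements merged into one kernel-verified Lean document; each statement's English description precedes it below -/
import Mathlib

section
/- For the family of Hermite polynomials with parameter α² > 0 defined via the generating function exp(-α²t²/2 + tx) = Σ_{n≥0} H_{n,α²}(x) t^n/n!, and for a centered real Gaussian random variable pair (X,Y) with Var(X) = a, Var(Y) = b, Cov(X,Y) = c, it holds that E[H_{n,a}(X) H_{m,b}(Y)] = δ_{n,m} · n! · c^n for all n, m ∈ ℕ. -/
open MeasureTheory ProbabilityTheory

open Polynomial Finset
open scoped NNReal ENNReal

lemma hasSum_coeff_zero {c : ℕ → ℝ}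
    (h : ∀ t : ℝ, HasSum (fun n : ℕ => c n * t ^ n) 0) : c = 0 := by
  set p := FormalMultilinearSeries.ofScalars ℝ c with hp
  have hnorm : ∀ n, ‖p n‖ = ‖c n‖ := fun n =>
    FormalMultilinearSeries.ofScalars_norm (E := ℝ) c n
  have hrad : p.radius = ⊤ := by
    apply ENNReal.eq_top_of_forall_nnreal_le
    intro r
    apply p.le_radius_of_tendsto (l := 0)
    have h0 : Filter.Tendsto (fun n : ℕ => c n * (r:ℝ) ^ n) Filter.atTop (nhds 0) :=
      (h r).summable.tendsto_atTop_zero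
    have := h0.norm
    simp only [norm_mul, norm_pow, Real.norm_eq_abs, norm_zero] at this
    simp only [hnorm, Real.norm_eq_abs]
    convert this using 2 with n
    rw [abs_of_nonneg (r.coe_nonneg)]
  have hball : HasFPowerSeriesOnBall (fun _ : ℝ => (0:ℝ)) p 0 ⊤ := by
    refine ⟨by simp [hrad], by simp, ?_⟩
    intro y _
    have h2 := h y
    have h3 : (fun n : ℕ => p n fun _ => y) = fun n : ℕ => c n * y ^ n := by
      funext n
      rw [hp, FormalMultilinearSeries.ofScalars_apply_eq, smul_eq_mul]
    rw [h3]
    simpa using h2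
  have hzero : p = 0 := (hball.hasFPowerSeriesAt).eq_zero
  exact (FormalMultilinearSeries.ofScalars_series_eq_zero (E := ℝ)).mp hzero

lemma hasSum_coeff_unique {c d : ℕ → ℝ} {F : ℝ → ℝ}
    (hc : ∀ t : ℝ, HasSum (fun n : ℕ => c n * t ^ n) (F t))
    (hd : ∀ t : ℝ, HasSum (fun n : ℕ => d n * t ^ n) (F t)) : c = d := by
  have h : ∀ t : ℝ, HasSum (fun n : ℕ => (c n - d n) * t ^ n) 0 := by
    intro t
    have := (hc t).sub (hd t)
    simpa [sub_mul] using this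
  have := hasSum_coeff_zero h
  funext n
  have hn := congrFun this n
  simpa [sub_eq_zero] using hn

lemma hasSum_exp_real (t : ℝ) : HasSum (fun i : ℕ => t ^ i / i.factorial) (Real.exp t) := by
  rw [Real.exp_eq_exp_ℝ]
  exact NormedSpace.expSeries_div_hasSum_exp t

lemma hasSum_cauchy {f g : ℕ → ℝ} {F G : ℝ} (hf : HasSum f F) (hg : HasSum g G)
    (hfa : Summable fun i => ‖f i‖) (hga : Summable fun j => ‖g j‖) :
    HasSum (fun n => ∑ kl ∈ Finset.HasAntidiagonal.antidiagonal n, f kl.1 * g kl.2) (F * G) := by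
  have hs := summable_norm_sum_mul_antidiagonal_of_summable_norm hfa hga
  have hsum : Summable (fun n => ∑ kl ∈ Finset.HasAntidiagonal.antidiagonal n, f kl.1 * g kl.2) :=
    Summable.of_norm hs
  rw [hsum.hasSum_iff, ← tsum_mul_tsum_eq_tsum_sum_antidiagonal_of_summable_norm hfa hga,
    hf.tsum_eq, hg.tsum_eq]

/-- coefficient of the `exp (α t²/2 + t x)` expansion. -/
noncomputable def ccoef (α : ℝ) (n i : ℕ) : ℝ :=
  if Even (n + i) then α ^ ((n - i) / 2) *
    ((Nat.doubleFactorial (n - i - 1) * n.choose i : ℕ) : ℝ) else 0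

noncomputable def cc (α x : ℝ) (n : ℕ) : ℝ :=
  ∑ i ∈ Finset.range (n + 1), ccoef α n i * x ^ i

lemma fact_two_mul (m : ℕ) :
    (2 * m).factorial = 2 ^ m * m.factorial * Nat.doubleFactorial (2 * m - 1) := by
  cases m with
  | zero => simp
  | succ k =>
    have h1 : 2 * (k + 1) = (2 * (k + 1) - 1) + 1 := by omega
    rw [h1, Nat.factorial_eq_mul_doubleFactorial, ← h1, Nat.doubleFactorial_two_mul]

lemma hasSum_cc (α x t : ℝ) :
    HasSum (fun n : ℕ => cc α x n * t ^ n / n.factorial)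
      (Real.exp (α * t ^ 2 / 2 + t * x)) := by
  classical
  set f : ℕ → ℝ := fun i =>
    (if Even i then (α / 2) ^ (i / 2) / (i / 2).factorial else 0) * t ^ i with hfdef
  set g : ℕ → ℝ := fun j => x ^ j * t ^ j / j.factorial with hgdef
  have hinj : Function.Injective (fun m : ℕ => 2 * m) := by
    intro a b h
    simp only at h
    omega
  have hnotr : ∀ i : ℕ, i ∉ Set.range (fun m : ℕ => 2 * m) → f i = 0 := by
    intro i hi
    have hie : ¬ Even i := by
      rintro ⟨r, hr⟩
      exact hi ⟨r, by show 2 * r = i; omega⟩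
    simp [hfdef, hie]
  have hcomp : (f ∘ fun m : ℕ => 2 * m) = fun m : ℕ => (α * t ^ 2 / 2) ^ m / m.factorial := by
    funext m
    have he : Even (2 * m) := ⟨m, by omega⟩
    simp only [Function.comp, hfdef, if_pos he]
    rw [Nat.mul_div_cancel_left m (by norm_num), div_pow α 2 m,
      div_pow (α * t ^ 2) 2 m, mul_pow, ← pow_mul]
    ring
  have hf : HasSum f (Real.exp (α * t ^ 2 / 2)) := by
    rw [← Function.Injective.hasSum_iff hinj hnotr, hcomp]
    exact hasSum_exp_real _
  have hg : HasSum g (Real.exp (t * x)) := by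
    have h1 : g = fun j : ℕ => (t * x) ^ j / j.factorial := by
      funext j; rw [hgdef]; rw [mul_pow]; ring
    rw [h1]; exact hasSum_exp_real _
  have hfa : Summable fun i => ‖f i‖ := by
    refine (Function.Injective.summable_iff hinj ?_).mp ?_
    · intro i hi; rw [hnotr i hi, norm_zero]
    · have h1 : ((fun i => ‖f i‖) ∘ fun m : ℕ => 2 * m)
          = fun m : ℕ => ‖(α * t ^ 2 / 2) ^ m / m.factorial‖ := by
        funext m
        show ‖(f ∘ fun m : ℕ => 2 * m) m‖ = _
        rw [hcomp]
      rw [h1]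
      exact ((hasSum_exp_real (|α * t ^ 2 / 2|)).summable).congr (fun m => by
        rw [norm_div, norm_pow, Real.norm_eq_abs, Real.norm_eq_abs, Nat.abs_cast])
  have hga : Summable fun j => ‖g j‖ := by
    exact ((hasSum_exp_real (|x * t|)).summable).congr (fun j => by
      rw [norm_div, norm_mul, norm_pow, norm_pow, Real.norm_eq_abs, Real.norm_eq_abs,
        Real.norm_eq_abs, Nat.abs_cast, abs_mul, mul_pow])
  have hFG := hasSum_cauchy hf hg hfa hga
  have hterm : ∀ n : ℕ, ∑ kl ∈ Finset.HasAntidiagonal.antidiagonal n, f kl.1 * g kl.2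
      = cc α x n * t ^ n / n.factorial := by
    intro n
    rw [Finset.Nat.sum_antidiagonal_eq_sum_range_succ (fun k l => f k * g l),
      ← Finset.sum_range_reflect]
    rw [cc, Finset.sum_mul, Finset.sum_div]
    refine Finset.sum_congr rfl ?_
    intro i hi
    have hi' : i ≤ n := by
      rw [Finset.mem_range] at hi; omega
    have e1 : n + 1 - 1 - i = n - i := by omega
    rw [e1, Nat.sub_sub_self hi']
    by_cases h : Even (n + i)
    · have hd : Even (n - i) := by
        rw [Nat.even_sub hi']; rw [Nat.even_add] at h; exact h
      obtain ⟨m, hm⟩ := hd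
      have hm2 : n - i = 2 * m := by omega
      have hd' : Even (n - i) := ⟨m, hm⟩
      simp only [hfdef, hgdef, ccoef, if_pos h, if_pos hd']
      rw [hm2, Nat.mul_div_cancel_left m (by norm_num)]
      have hni : 2 * m + i = n := by omega
      have hnat : n.factorial
          = 2 ^ m * m.factorial * Nat.doubleFactorial (2 * m - 1)
            * (n.choose i * i.factorial) := by
        rw [← Nat.choose_mul_factorial_mul_factorial hi', hm2, fact_two_mul]; ring
      have step1 : (α / 2) ^ m / (m.factorial : ℝ) * t ^ (2 * m) * (x ^ i * t ^ i / i.factorial)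
          = α ^ m * x ^ i * t ^ n / (2 ^ m * m.factorial * i.factorial) := by
        rw [div_pow α 2 m, ← hni, pow_add]
        ring
      rw [step1]
      rw [div_eq_div_iff (by positivity) (by positivity), hnat]
      push_cast
      ring
    · have hd : ¬ Even (n - i) := by
        rw [Nat.even_sub hi']; rw [Nat.even_add] at h; exact h
      simp [hfdef, hgdef, ccoef, if_neg h, if_neg hd]
  have h2 : (fun n => ∑ kl ∈ Finset.HasAntidiagonal.antidiagonal n, f kl.1 * g kl.2)
      = fun n : ℕ => cc α x n * t ^ n / n.factorial := funext hterm
  rw [h2, ← Real.exp_add] at hFG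
  exact hFG

noncomputable def He (n : ℕ) (x : ℝ) : ℝ := aeval x (hermite n)

lemma cc_neg_one (x : ℝ) (n : ℕ) : cc (-1) x n = He n x := by
  rw [He, aeval_eq_sum_range, natDegree_hermite, cc]
  refine Finset.sum_congr rfl ?_
  intro i _
  rw [zsmul_eq_mul, coeff_hermite, ccoef]
  split_ifs with h
  · push_cast
    ring
  · simp

lemma ccoef_one_nonneg (n i : ℕ) : 0 ≤ ccoef 1 n i := by
  rw [ccoef]
  split_ifs with h
  · positivity
  · exact le_refl _

lemma abs_ccoef_neg_one (n i : ℕ) : |ccoef (-1) n i| = ccoef 1 n i := by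
  rw [ccoef, ccoef]
  split_ifs with h
  · rw [abs_mul, abs_pow, abs_neg, abs_one, one_pow, one_mul, Nat.abs_cast]
    rw [one_mul]
  · simp

lemma abs_He_le (x : ℝ) (n : ℕ) : |He n x| ≤ cc 1 |x| n := by
  rw [← cc_neg_one, cc, cc]
  refine (Finset.abs_sum_le_sum_abs _ _).trans ?_
  refine Finset.sum_le_sum ?_
  intro i _
  rw [abs_mul, abs_pow, abs_ccoef_neg_one]

lemma hasSum_He (x t : ℝ) :
    HasSum (fun n : ℕ => He n x * t ^ n / n.factorial)
      (Real.exp (-1 * t ^ 2 / 2 + t * x)) := by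
  have h := hasSum_cc (-1) x t
  simp only [cc_neg_one] at h
  exact h

lemma hasSum_He_scaled (w x t : ℝ) :
    HasSum (fun n : ℕ => w ^ n * He n x * t ^ n / n.factorial)
      (Real.exp (-(w ^ 2) * t ^ 2 / 2 + t * (w * x))) := by
  have h := hasSum_He x (w * t)
  have e : (fun n : ℕ => He n x * (w * t) ^ n / n.factorial)
      = fun n : ℕ => w ^ n * He n x * t ^ n / n.factorial := by
    funext n; rw [mul_pow]; ring
  rw [e] at h
  rw [show -(w ^ 2) * t ^ 2 / 2 + t * (w * x) = -1 * (w * t) ^ 2 / 2 + (w * t) * x by ring]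
  exact h

lemma summable_abs_He_scaled (w x t : ℝ) :
    Summable (fun n : ℕ => ‖w ^ n * He n x * t ^ n / n.factorial‖) := by
  have hmaj := (hasSum_cc 1 |x| (|w * t|)).summable
  refine Summable.of_nonneg_of_le (fun n => norm_nonneg _) (fun n => ?_) hmaj
  rw [norm_div, norm_mul, norm_mul, norm_pow, norm_pow, Real.norm_eq_abs, Real.norm_eq_abs,
    Real.norm_eq_abs, Real.norm_eq_abs, Nat.abs_cast]
  rw [abs_mul, mul_pow]
  have hfac : (0:ℝ) < n.factorial := by positivity
  rw [div_le_div_iff₀ hfac hfac]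
  have h1 := abs_He_le x n
  have hw : (0:ℝ) ≤ |w| ^ n := by positivity
  have ht : (0:ℝ) ≤ |t| ^ n := by positivity
  have key : |w| ^ n * |He n x| * |t| ^ n ≤ cc 1 |x| n * (|w| ^ n * |t| ^ n) := by
    calc |w| ^ n * |He n x| * |t| ^ n = |He n x| * (|w| ^ n * |t| ^ n) := by ring
    _ ≤ cc 1 |x| n * (|w| ^ n * |t| ^ n) := mul_le_mul_of_nonneg_right h1 (mul_nonneg hw ht)
  exact mul_le_mul_of_nonneg_right key hfac.le

lemma split_lemma (H : ℕ → ℝ → ℝ) (a : ℝ)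
    (hH : ∀ t x : ℝ, HasSum (fun n : ℕ => H n x * t ^ n / n.factorial)
      (Real.exp (-a * t ^ 2 / 2 + t * x)))
    (w₁ w₂ : ℝ) (hw : w₁ ^ 2 + w₂ ^ 2 = a) (x₁ x₂ : ℝ) (n : ℕ) :
    H n (w₁ * x₁ + w₂ * x₂) = (n.factorial : ℝ) *
      ∑ kl ∈ Finset.HasAntidiagonal.antidiagonal n,
        (w₁ ^ kl.1 * He kl.1 x₁ / kl.1.factorial) *
        (w₂ ^ kl.2 * He kl.2 x₂ / kl.2.factorial) := by
  set c : ℕ → ℝ := fun N => H N (w₁ * x₁ + w₂ * x₂) / N.factorial with hcdef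
  set d : ℕ → ℝ := fun N => ∑ kl ∈ Finset.HasAntidiagonal.antidiagonal N,
        (w₁ ^ kl.1 * He kl.1 x₁ / kl.1.factorial) *
        (w₂ ^ kl.2 * He kl.2 x₂ / kl.2.factorial) with hddef
  have hc : ∀ t : ℝ, HasSum (fun N : ℕ => c N * t ^ N)
      (Real.exp (-a * t ^ 2 / 2 + t * (w₁ * x₁ + w₂ * x₂))) := by
    intro t
    have h := hH t (w₁ * x₁ + w₂ * x₂)
    have e : (fun N : ℕ => H N (w₁ * x₁ + w₂ * x₂) * t ^ N / N.factorial)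
        = fun N : ℕ => c N * t ^ N := by
      funext N; rw [hcdef]; ring
    rw [e] at h; exact h
  have hd : ∀ t : ℝ, HasSum (fun N : ℕ => d N * t ^ N)
      (Real.exp (-a * t ^ 2 / 2 + t * (w₁ * x₁ + w₂ * x₂))) := by
    intro t
    have h := hasSum_cauchy (hasSum_He_scaled w₁ x₁ t) (hasSum_He_scaled w₂ x₂ t)
      (summable_abs_He_scaled w₁ x₁ t) (summable_abs_He_scaled w₂ x₂ t)
    rw [← Real.exp_add] at h
    rw [show -a * t ^ 2 / 2 + t * (w₁ * x₁ + w₂ * x₂)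
        = -(w₁ ^ 2) * t ^ 2 / 2 + t * (w₁ * x₁) + (-(w₂ ^ 2) * t ^ 2 / 2 + t * (w₂ * x₂)) by
      rw [← hw]; ring]
    have e : (fun N : ℕ => ∑ kl ∈ Finset.HasAntidiagonal.antidiagonal N,
          (w₁ ^ kl.1 * He kl.1 x₁ * t ^ kl.1 / kl.1.factorial) *
          (w₂ ^ kl.2 * He kl.2 x₂ * t ^ kl.2 / kl.2.factorial))
        = fun N : ℕ => d N * t ^ N := by
      funext N
      rw [hddef, Finset.sum_mul]
      refine Finset.sum_congr rfl ?_
      intro kl hkl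
      have hklm : kl.1 + kl.2 = N := Finset.HasAntidiagonal.mem_antidiagonal.mp hkl
      rw [← hklm, pow_add]
      ring
    rw [e] at h
    exact h
  have hcd := hasSum_coeff_unique hc hd
  have hn := congrFun hcd n
  rw [hcdef, hddef] at hn
  simp only at hn
  rw [div_eq_iff (by positivity : (n.factorial : ℝ) ≠ 0)] at hn
  rw [hn]; ring

noncomputable def gm : Measure ℝ := gaussianReal 0 1

instance : IsProbabilityMeasure gm := by
  rw [gm]; infer_instance

lemma gm_eq : gm = MeasureTheory.volume.withDensity (gaussianPDF 0 1) :=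
  gaussianReal_of_var_ne_zero 0 one_ne_zero

lemma gaussianPDFReal_simp (x : ℝ) :
    gaussianPDFReal 0 1 x = (Real.sqrt (2 * Real.pi))⁻¹ * Real.exp (-(x ^ 2 / 2)) := by
  rw [gaussianPDFReal]
  norm_num
  exact Or.inl (by ring)

lemma integral_gm (f : ℝ → ℝ) :
    ∫ x, f x ∂gm = ∫ x, gaussianPDFReal 0 1 x * f x := by
  rw [gm_eq]
  have h1 : gaussianPDF 0 1 = fun x => ((Real.toNNReal (gaussianPDFReal 0 1 x) : ℝ≥0) : ℝ≥0∞) := by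
    funext x
    rw [gaussianPDF]
    rfl
  rw [h1, integral_withDensity_eq_integral_smul (measurable_gaussianPDFReal 0 1).real_toNNReal f]
  congr 1
  funext x
  rw [NNReal.smul_def, Real.coe_toNNReal _ (gaussianPDFReal_nonneg 0 1 x), smul_eq_mul]

lemma integrable_exp_shift (c : ℝ) :
    Integrable (fun x : ℝ => Real.exp (-(x ^ 2 / 2) + c * x)) := by
  have h0 : Integrable (fun x : ℝ => Real.exp (-(1/2 : ℝ) * x ^ 2)) :=
    integrable_exp_neg_mul_sq (by norm_num)
  have h1 := (h0.comp_sub_right c).const_mul (Real.exp (c ^ 2 / 2))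
  refine h1.congr ?_
  filter_upwards with x
  rw [← Real.exp_add]
  congr 1
  ring

lemma integrable_pow_gauss (k : ℕ) :
    Integrable (fun x : ℝ => x ^ k * Real.exp (-(x ^ 2 / 2))) := by
  have hmaj : Integrable (fun x : ℝ => (k.factorial : ℝ) *
      (Real.exp (-(x ^ 2 / 2) + 1 * x) + Real.exp (-(x ^ 2 / 2) + (-1) * x))) :=
    ((integrable_exp_shift 1).add (integrable_exp_shift (-1))).const_mul _
  refine hmaj.mono' ?_ ?_
  · exact ((continuous_pow k).mul (Real.continuous_exp.comp (by fun_prop))).aestronglyMeasurable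
  · filter_upwards with x
    have hE : (0:ℝ) < Real.exp (-(x ^ 2 / 2)) := Real.exp_pos _
    have h1 : |x| ^ k ≤ (k.factorial : ℝ) * Real.exp |x| := by
      have h := le_hasSum (hasSum_exp_real |x|) k (fun i _ => by positivity)
      rw [div_le_iff₀ (by positivity : (0:ℝ) < (k.factorial : ℝ))] at h
      calc |x| ^ k = |x| ^ k := rfl
      _ ≤ Real.exp |x| * k.factorial := h
      _ = (k.factorial : ℝ) * Real.exp |x| := by ring
    have h2 : Real.exp |x| ≤ Real.exp x + Real.exp (-x) := by
      rcases abs_cases x with ⟨h, _⟩ | ⟨h, _⟩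
      · rw [h]; linarith [Real.exp_pos (-x)]
      · rw [h]; linarith [Real.exp_pos x]
    have hnorm : ‖x ^ k * Real.exp (-(x ^ 2 / 2))‖ = |x| ^ k * Real.exp (-(x ^ 2 / 2)) := by
      rw [norm_mul, norm_pow, Real.norm_eq_abs, Real.norm_eq_abs, Real.abs_exp]
    rw [hnorm]
    calc |x| ^ k * Real.exp (-(x ^ 2 / 2))
        ≤ ((k.factorial : ℝ) * Real.exp |x|) * Real.exp (-(x ^ 2 / 2)) :=
          mul_le_mul_of_nonneg_right h1 hE.le
      _ ≤ ((k.factorial : ℝ) * (Real.exp x + Real.exp (-x))) * Real.exp (-(x ^ 2 / 2)) := by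
          have h0 : (0:ℝ) ≤ (k.factorial : ℝ) := by positivity
          have h3 := mul_le_mul_of_nonneg_left h2 h0
          exact mul_le_mul_of_nonneg_right h3 hE.le
      _ = (k.factorial : ℝ) *
          (Real.exp (-(x ^ 2 / 2) + 1 * x) + Real.exp (-(x ^ 2 / 2) + (-1) * x)) := by
          rw [Real.exp_add, Real.exp_add, one_mul, neg_one_mul]
          ring

lemma integrable_poly_gauss (p : ℝ[X]) :
    Integrable (fun x : ℝ => p.eval x * Real.exp (-(x ^ 2 / 2))) := by
  have he : (fun x : ℝ => p.eval x * Real.exp (-(x ^ 2 / 2)))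
      = fun x : ℝ => ∑ i ∈ Finset.range (p.natDegree + 1),
          p.coeff i * (x ^ i * Real.exp (-(x ^ 2 / 2))) := by
    funext x
    rw [eval_eq_sum_range, Finset.sum_mul]
    refine Finset.sum_congr rfl ?_
    intro i _
    ring
  rw [he]
  exact integrable_finset_sum _ (fun i _ => (integrable_pow_gauss i).const_mul _)

lemma integrable_poly_gm (p : ℝ[X]) : Integrable (fun x => p.eval x) gm := by
  rw [gm_eq, integrable_withDensity_iff (measurable_gaussianPDF 0 1)
    (Filter.Eventually.of_forall (fun x => ENNReal.ofReal_lt_top))]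
  refine ((integrable_poly_gauss p).const_mul ((Real.sqrt (2 * Real.pi))⁻¹)).congr ?_
  filter_upwards with x
  rw [gaussianPDF, ENNReal.toReal_ofReal (gaussianPDFReal_nonneg 0 1 x), gaussianPDFReal_simp]
  ring

lemma stein (p : ℝ[X]) :
    ∫ x, x * p.eval x ∂gm = ∫ x, (derivative p).eval x ∂gm := by
  rw [integral_gm, integral_gm]
  have e1 : (fun x => gaussianPDFReal 0 1 x * (x * p.eval x))
      = fun x => (Real.sqrt (2 * Real.pi))⁻¹ * (p.eval x * (x * Real.exp (-(x ^ 2 / 2)))) := by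
    funext x; rw [gaussianPDFReal_simp]; ring
  have e2 : (fun x => gaussianPDFReal 0 1 x * (derivative p).eval x)
      = fun x => (Real.sqrt (2 * Real.pi))⁻¹ *
          ((derivative p).eval x * Real.exp (-(x ^ 2 / 2))) := by
    funext x; rw [gaussianPDFReal_simp]; ring
  rw [e1, e2, integral_const_mul, integral_const_mul]
  congr 1
  have hu : ∀ x : ℝ, HasDerivAt (fun y => p.eval y) ((derivative p).eval x) x :=
    fun x => p.hasDerivAt x
  have hv : ∀ x : ℝ, HasDerivAt (fun y : ℝ => -Real.exp (-(y ^ 2 / 2)))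
      (x * Real.exp (-(x ^ 2 / 2))) x := by
    intro x
    have hinner : HasDerivAt (fun y : ℝ => -(y ^ 2 / 2)) (-x) x := by
      have := ((hasDerivAt_pow 2 x).div_const 2).neg
      refine this.congr_deriv ?_
      push_cast
      ring
    have := hinner.exp.neg
    refine this.congr_deriv ?_
    ring
  have huv' : Integrable (fun x : ℝ => p.eval x * (x * Real.exp (-(x ^ 2 / 2)))) := by
    refine (integrable_poly_gauss (p * X)).congr ?_
    filter_upwards with x
    rw [eval_mul, eval_X]
    ring
  have hu'v : Integrable (fun x : ℝ => (derivative p).eval x * (-Real.exp (-(x ^ 2 / 2)))) := by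
    refine (integrable_poly_gauss (derivative p)).neg.congr ?_
    filter_upwards with x
    simp only [Pi.neg_apply]
    ring
  have huv : Integrable (fun x : ℝ => p.eval x * (-Real.exp (-(x ^ 2 / 2)))) := by
    refine (integrable_poly_gauss p).neg.congr ?_
    filter_upwards with x
    simp only [Pi.neg_apply]
    ring
  have key := integral_mul_deriv_eq_deriv_mul_of_integrable (fun x _ => hu x) (fun x _ => hv x) huv' hu'v huv
  rw [key]
  rw [← integral_neg]
  congr 1
  funext x
  ring

noncomputable def intg (p : ℝ[X]) : ℝ := ∫ x, p.eval x ∂gm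

lemma intg_add (p q : ℝ[X]) : intg (p + q) = intg p + intg q := by
  rw [intg, intg, intg]
  simp only [eval_add]
  exact integral_add (integrable_poly_gm p) (integrable_poly_gm q)

lemma intg_sub (p q : ℝ[X]) : intg (p - q) = intg p - intg q := by
  rw [intg, intg, intg]
  simp only [eval_sub]
  exact integral_sub (integrable_poly_gm p) (integrable_poly_gm q)

lemma intg_C_mul (r : ℝ) (p : ℝ[X]) : intg (C r * p) = r * intg p := by
  rw [intg, intg]
  simp only [eval_mul, eval_C]
  exact integral_const_mul r _

lemma intg_X_mul (p : ℝ[X]) : intg (X * p) = intg (derivative p) := by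
  rw [intg, intg]
  have := stein p
  simpa [eval_mul, eval_X] using this

lemma intg_one : intg 1 = 1 := by
  rw [intg]
  simp

lemma intg_zero : intg 0 = 0 := by
  rw [intg]
  simp

noncomputable def Hr (n : ℕ) : ℝ[X] := (hermite n).map (Int.castRingHom ℝ)

lemma Hr_zero : Hr 0 = 1 := by simp [Hr, hermite_zero]

lemma Hr_one : Hr 1 = X := by simp [Hr, hermite_one]

lemma Hr_succ (n : ℕ) : Hr (n + 1) = X * Hr n - derivative (Hr n) := by
  rw [Hr, hermite_succ]
  simp [Polynomial.map_sub, Polynomial.map_mul, derivative_map, Hr]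

lemma He_eval (n : ℕ) (x : ℝ) : aeval x (hermite n) = (Hr n).eval x := by
  rw [aeval_def, Hr, eval_map, algebraMap_int_eq]

lemma deriv_Hr : ∀ n : ℕ, derivative (Hr (n + 1)) = C ((n : ℝ) + 1) * Hr n := by
  intro n
  induction n with
  | zero => simp [Hr_one, Hr_zero]
  | succ k ih =>
    rw [Hr_succ (k + 1), derivative_sub, derivative_mul, derivative_X, ih]
    rw [derivative_mul, derivative_C]
    have : (1 : ℝ[X]) * Hr (k + 1) + X * (C ((k : ℝ) + 1) * Hr k)
        - (0 * Hr k + C ((k : ℝ) + 1) * derivative (Hr k))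
        = Hr (k + 1) + C ((k : ℝ) + 1) * (X * Hr k - derivative (Hr k)) := by
      ring
    rw [this, ← Hr_succ]
    push_cast
    have hC : C ((k : ℝ) + 1 + 1) = C ((k : ℝ) + 1) + 1 := by
      rw [C_add, C_1]
    rw [hC]
    ring

lemma intg_Hr : ∀ l : ℕ, intg (Hr l) = if l = 0 then 1 else 0 := by
  intro l
  cases l with
  | zero => simp [Hr_zero, intg_one]
  | succ k =>
    rw [Hr_succ, intg_sub, intg_X_mul]
    simp

lemma orth_Hr : ∀ k l : ℕ, intg (Hr k * Hr l) = if k = l then (k.factorial : ℝ) else 0 := by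
  intro k
  induction k with
  | zero =>
    intro l
    rw [Hr_zero, one_mul, intg_Hr]
    rcases Nat.eq_zero_or_pos l with h | h
    · subst h; simp
    · rw [if_neg (by omega), if_neg (by omega)]
  | succ k ih =>
    intro l
    have key : intg (Hr (k + 1) * Hr l) = intg (Hr k * derivative (Hr l)) := by
      have e1 : Hr (k + 1) * Hr l = X * (Hr k * Hr l) - derivative (Hr k) * Hr l := by
        rw [Hr_succ]; ring
      rw [e1, intg_sub, intg_X_mul, derivative_mul]
      rw [intg_add]
      ring
    rw [key]
    cases l with
    | zero =>
      rw [Hr_zero, derivative_one, mul_zero, intg_zero, if_neg (by omega)]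
    | succ l =>
      rw [deriv_Hr l]
      have e2 : Hr k * (C ((l : ℝ) + 1) * Hr l) = C ((l : ℝ) + 1) * (Hr k * Hr l) := by ring
      rw [e2, intg_C_mul, ih l]
      by_cases h : k = l
      · subst h
        rw [if_pos rfl, if_pos rfl, Nat.factorial_succ]
        push_cast
        ring
      · rw [if_neg h, if_neg (by omega), mul_zero]


lemma He_eval' (n : ℕ) (x : ℝ) : He n x = (Hr n).eval x := by
  rw [He, He_eval]

lemma integrable_He_mul (k l : ℕ) : Integrable (fun x => He k x * He l x) gm := by
  refine (integrable_poly_gm (Hr k * Hr l)).congr ?_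
  filter_upwards with x
  rw [eval_mul, ← He_eval', ← He_eval']

lemma orth_He (k l : ℕ) :
    ∫ x, He k x * He l x ∂gm = if k = l then (k.factorial : ℝ) else 0 := by
  have h : ∫ x, He k x * He l x ∂gm = intg (Hr k * Hr l) := by
    rw [intg]
    congr 1
    funext x
    rw [eval_mul, He_eval', He_eval']
  rw [h, orth_Hr]

/-- **Orthogonality of Hermite polynomials for a jointly Gaussian pair.**
The centered Gaussian pair `(X, Y)` with `Var X = a`, `Var Y = b`, `Cov (X,Y) = c`
is realized as linear functionals `X ω = u₁ω₁ + u₂ω₂`, `Y ω = v₁ω₁ + v₂ω₂` of two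
independent standard Gaussians, with `⟨u,u⟩ = a`, `⟨v,v⟩ = b`, `⟨u,v⟩ = c`.
`Ha n` (resp. `Hb n`) is the `n`-th Hermite polynomial with parameter `a` (resp. `b`),
defined via its generating function.  Then
`E[Ha n (X) * Hb m (Y)] = δ_{n,m} · n! · cⁿ`. -/
theorem hermite_orthogonality_gaussian_pair
    (a b c : ℝ) (ha : 0 < a) (hb : 0 < b)
    (u v : ℝ × ℝ)
    (hVa : u.1 ^ 2 + u.2 ^ 2 = a) (hVb : v.1 ^ 2 + v.2 ^ 2 = b)
    (hCov : u.1 * v.1 + u.2 * v.2 = c)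
    (X Y : ℝ × ℝ → ℝ)
    (hX : ∀ ω, X ω = u.1 * ω.1 + u.2 * ω.2)
    (hY : ∀ ω, Y ω = v.1 * ω.1 + v.2 * ω.2)
    (Ha Hb : ℕ → ℝ → ℝ)
    (hHa : ∀ t x : ℝ, HasSum (fun n : ℕ => Ha n x * t ^ n / n.factorial)
      (Real.exp (-a * t ^ 2 / 2 + t * x)))
    (hHb : ∀ t x : ℝ, HasSum (fun n : ℕ => Hb n x * t ^ n / n.factorial)
      (Real.exp (-b * t ^ 2 / 2 + t * x)))
    (n m : ℕ) :
    ∫ ω, Ha n (X ω) * Hb m (Y ω)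
        ∂((gaussianReal 0 1).prod (gaussianReal 0 1)) =
      if n = m then (n.factorial : ℝ) * c ^ n else 0 := by
  have hgm : (gaussianReal 0 1 : Measure ℝ) = gm := rfl
  rw [hgm]
  -- rewrite the integrand as a double finite sum
  have hint : ∀ ω : ℝ × ℝ, Ha n (X ω) * Hb m (Y ω)
      = ∑ p ∈ Finset.HasAntidiagonal.antidiagonal n, ∑ q ∈ Finset.HasAntidiagonal.antidiagonal m,
          ((n.factorial : ℝ) * (m.factorial : ℝ)) *
          (((u.1 ^ p.1 * He p.1 ω.1 / p.1.factorial) *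
            (u.2 ^ p.2 * He p.2 ω.2 / p.2.factorial)) *
           ((v.1 ^ q.1 * He q.1 ω.1 / q.1.factorial) *
            (v.2 ^ q.2 * He q.2 ω.2 / q.2.factorial))) := by
    intro ω
    rw [hX, hY, split_lemma Ha a hHa u.1 u.2 hVa ω.1 ω.2 n,
      split_lemma Hb b hHb v.1 v.2 hVb ω.1 ω.2 m]
    rw [show ∀ A B S T : ℝ, (A * S) * (B * T) = (A * B) * (S * T) from fun _ _ _ _ => by ring]
    rw [Finset.sum_mul_sum, Finset.mul_sum]
    refine Finset.sum_congr rfl fun p _ => ?_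
    rw [Finset.mul_sum]
  simp only [hint]
  -- integrability of each term
  have hterm_int : ∀ (p q : ℕ × ℕ),
      Integrable (fun ω : ℝ × ℝ =>
        ((n.factorial : ℝ) * (m.factorial : ℝ)) *
          (((u.1 ^ p.1 * He p.1 ω.1 / p.1.factorial) *
            (u.2 ^ p.2 * He p.2 ω.2 / p.2.factorial)) *
           ((v.1 ^ q.1 * He q.1 ω.1 / q.1.factorial) *
            (v.2 ^ q.2 * He q.2 ω.2 / q.2.factorial)))) (gm.prod gm) := by
    intro p q
    have h1 : Integrable (fun x : ℝ =>
        ((n.factorial : ℝ) * m.factorial * u.1 ^ p.1 * v.1 ^ q.1 /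
          (p.1.factorial * q.1.factorial)) * (He p.1 x * He q.1 x)) gm :=
      (integrable_He_mul p.1 q.1).const_mul _
    have h2 : Integrable (fun y : ℝ =>
        (u.2 ^ p.2 * v.2 ^ q.2 / (p.2.factorial * q.2.factorial)) *
          (He p.2 y * He q.2 y)) gm :=
      (integrable_He_mul p.2 q.2).const_mul _
    refine (h1.mul_prod h2).congr ?_
    filter_upwards with ω
    ring
  rw [integral_finset_sum _ (fun p _ => integrable_finset_sum _ (fun q _ => hterm_int p q))]
  have hswap : ∀ p ∈ Finset.HasAntidiagonal.antidiagonal n, ∀ q ∈ Finset.HasAntidiagonal.antidiagonal m,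
      (∫ ω : ℝ × ℝ, ((n.factorial : ℝ) * (m.factorial : ℝ)) *
          (((u.1 ^ p.1 * He p.1 ω.1 / p.1.factorial) *
            (u.2 ^ p.2 * He p.2 ω.2 / p.2.factorial)) *
           ((v.1 ^ q.1 * He q.1 ω.1 / q.1.factorial) *
            (v.2 ^ q.2 * He q.2 ω.2 / q.2.factorial))) ∂(gm.prod gm))
      = ((n.factorial : ℝ) * m.factorial * u.1 ^ p.1 * v.1 ^ q.1 * u.2 ^ p.2 * v.2 ^ q.2 /
          (p.1.factorial * q.1.factorial * p.2.factorial * q.2.factorial)) *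
        ((if p.1 = q.1 then (p.1.factorial : ℝ) else 0) *
         (if p.2 = q.2 then (p.2.factorial : ℝ) else 0)) := by
    intro p _ q _
    have e : (fun ω : ℝ × ℝ => ((n.factorial : ℝ) * (m.factorial : ℝ)) *
          (((u.1 ^ p.1 * He p.1 ω.1 / p.1.factorial) *
            (u.2 ^ p.2 * He p.2 ω.2 / p.2.factorial)) *
           ((v.1 ^ q.1 * He q.1 ω.1 / q.1.factorial) *
            (v.2 ^ q.2 * He q.2 ω.2 / q.2.factorial))))
        = fun ω : ℝ × ℝ =>
          (((n.factorial : ℝ) * m.factorial * u.1 ^ p.1 * v.1 ^ q.1 /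
            (p.1.factorial * q.1.factorial)) * (He p.1 ω.1 * He q.1 ω.1)) *
          ((u.2 ^ p.2 * v.2 ^ q.2 / (p.2.factorial * q.2.factorial)) *
            (He p.2 ω.2 * He q.2 ω.2)) := by
      funext ω
      ring
    have hip := integral_prod_mul (μ := gm) (ν := gm)
      (f := fun x => ((n.factorial : ℝ) * m.factorial * u.1 ^ p.1 * v.1 ^ q.1 /
            (p.1.factorial * q.1.factorial)) * (He p.1 x * He q.1 x))
      (g := fun y => (u.2 ^ p.2 * v.2 ^ q.2 / (p.2.factorial * q.2.factorial)) *
            (He p.2 y * He q.2 y))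
    rw [e, hip, integral_const_mul, integral_const_mul, orth_He, orth_He]
    ring
  rw [Finset.sum_congr rfl (fun p _ => integral_finset_sum _ (fun q _ => hterm_int p q))]
  rw [Finset.sum_congr rfl (fun p hp => Finset.sum_congr rfl (fun q hq => hswap p hp q hq))]
  -- now pure combinatorics
  by_cases hnm : n = m
  · subst hnm
    rw [if_pos rfl]
    have hdiag : ∀ p ∈ Finset.HasAntidiagonal.antidiagonal n,
        (∑ q ∈ Finset.HasAntidiagonal.antidiagonal n,
          ((n.factorial : ℝ) * n.factorial * u.1 ^ p.1 * v.1 ^ q.1 * u.2 ^ p.2 * v.2 ^ q.2 /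
            (p.1.factorial * q.1.factorial * p.2.factorial * q.2.factorial)) *
          ((if p.1 = q.1 then (p.1.factorial : ℝ) else 0) *
           (if p.2 = q.2 then (p.2.factorial : ℝ) else 0)))
        = (n.factorial : ℝ) * (n.factorial : ℝ) / (p.1.factorial * p.2.factorial) *
            ((u.1 * v.1) ^ p.1 * (u.2 * v.2) ^ p.2) := by
      intro p hp
      rw [Finset.sum_eq_single_of_mem p hp]
      · rw [if_pos rfl, if_pos rfl]
        have hz1 : (p.1.factorial : ℝ) ≠ 0 := by positivity
        have hz2 : (p.2.factorial : ℝ) ≠ 0 := by positivity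
        field_simp
        ring
      · intro q hq hqp
        have h1 : p.1 + p.2 = n := Finset.HasAntidiagonal.mem_antidiagonal.mp hp
        have h2 : q.1 + q.2 = n := Finset.HasAntidiagonal.mem_antidiagonal.mp hq
        by_cases h : p.1 = q.1
        · have : p.2 ≠ q.2 := by
            intro h2'
            exact hqp (Prod.ext h h2').symm
          rw [if_neg this, mul_zero, mul_zero]
        · rw [if_neg h, zero_mul, mul_zero]
    rw [Finset.sum_congr rfl hdiag]
    rw [Finset.Nat.sum_antidiagonal_eq_sum_range_succ
      (fun k l => (n.factorial : ℝ) * (n.factorial : ℝ) / (k.factorial * l.factorial) *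
        ((u.1 * v.1) ^ k * (u.2 * v.2) ^ l))]
    rw [← hCov, add_pow, Finset.mul_sum]
    refine Finset.sum_congr rfl fun k hk => ?_
    have hk' : k ≤ n := by rw [Finset.mem_range] at hk; omega
    have hch : (n.choose k : ℝ) = (n.factorial : ℝ) / (k.factorial * (n - k).factorial) := by
      rw [eq_div_iff (by positivity)]
      rw [← Nat.choose_mul_factorial_mul_factorial hk']
      push_cast
      ring
    rw [hch]
    have hz1 : (k.factorial : ℝ) ≠ 0 := by positivity
    have hz2 : ((n - k).factorial : ℝ) ≠ 0 := by positivity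
    field_simp
  · rw [if_neg hnm]
    refine Finset.sum_eq_zero fun p hp => Finset.sum_eq_zero fun q hq => ?_
    have h1 : p.1 + p.2 = n := Finset.HasAntidiagonal.mem_antidiagonal.mp hp
    have h2 : q.1 + q.2 = m := Finset.HasAntidiagonal.mem_antidiagonal.mp hq
    by_cases h : p.1 = q.1
    · have : p.2 ≠ q.2 := by
        intro h2'
        exact hnm (by omega)
      rw [if_neg this, mul_zero, mul_zero]
    · rw [if_neg h, zero_mul, mul_zero]
end

section
/- Let H be a separable real Hilbert space and (A, D(A)) a closed densely defined operator on H with ‖Af‖ ≥ ‖f‖ for all f ∈ D(A). Then for every n ≥ 1 and f in the domain of A^{⊗n} (n-fold tensor power on H^{⊗n}), ‖A^{⊗n}f‖ ≥ ‖f‖. -/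
open scoped RealInnerProductSpace Matrix

open Finset in
private lemma dot_gram_aux {E : Type*} [NormedAddCommGroup E] [InnerProductSpace ℝ E]
    {m : ℕ} (y : Fin m → E) (d : Fin m → ℝ) :
    dotProduct (star d) ((Matrix.of fun j k => (⟪y j, y k⟫ : ℝ)) *ᵥ d) =
      ⟪∑ j, d j • y j, ∑ j, d j • y j⟫ := by
  rw [sum_inner]
  simp only [dotProduct, Matrix.mulVec, Matrix.of_apply, Pi.star_apply, star_trivial,
    dotProduct]
  refine Finset.sum_congr rfl fun j _ => ?_
  rw [real_inner_smul_left, inner_sum, Finset.mul_sum, Finset.mul_sum]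
  refine Finset.sum_congr rfl fun k _ => ?_
  rw [real_inner_smul_right]
  ring

private lemma gram_posSemidef {E : Type*} [NormedAddCommGroup E] [InnerProductSpace ℝ E]
    {m : ℕ} (y : Fin m → E) :
    Matrix.PosSemidef (Matrix.of fun j k => (⟪y j, y k⟫ : ℝ)) := by
  refine Matrix.PosSemidef.of_dotProduct_mulVec_nonneg ?_ ?_
  · ext j k
    simp [Matrix.conjTranspose_apply, real_inner_comm]
  · intro d
    rw [dot_gram_aux]
    exact real_inner_self_nonneg

private lemma schur_posSemidef {m : ℕ} {K L : Matrix (Fin m) (Fin m) ℝ}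
    (hK : K.PosSemidef) (hL : L.PosSemidef) :
    Matrix.PosSemidef (Matrix.of fun j k => K j k * L j k) := by
  obtain ⟨P, rfl⟩ : ∃ P : Matrix (Fin m) (Fin m) ℝ, K = Pᴴ * P := by
    open scoped MatrixOrder in exact CStarAlgebra.nonneg_iff_eq_star_mul_self.mp hK.nonneg
  obtain ⟨Q, rfl⟩ : ∃ Q : Matrix (Fin m) (Fin m) ℝ, L = Qᴴ * Q := by
    open scoped MatrixOrder in exact CStarAlgebra.nonneg_iff_eq_star_mul_self.mp hL.nonneg
  have hfac : (Matrix.of fun j k => (Pᴴ * P) j k * (Qᴴ * Q) j k) =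
      (Matrix.of fun (lp : Fin m × Fin m) j => P lp.1 j * Q lp.2 j)ᴴ *
        (Matrix.of fun (lp : Fin m × Fin m) j => P lp.1 j * Q lp.2 j) := by
    ext j k
    simp only [Matrix.of_apply, Matrix.mul_apply, Matrix.conjTranspose_apply, star_trivial,
      Finset.sum_mul_sum]
    rw [Fintype.sum_prod_type]
    refine Finset.sum_congr rfl fun lp _ => ?_
    refine Finset.sum_congr rfl fun p _ => ?_
    ring
  rw [hfac]
  exact Matrix.posSemidef_conjTranspose_mul_self _

private lemma psd_sum_nonneg {m : ℕ} {M : Matrix (Fin m) (Fin m) ℝ} (hM : M.PosSemidef)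
    (c : Fin m → ℝ) : 0 ≤ ∑ j, ∑ k, c j * c k * M j k := by
  have h := hM.dotProduct_mulVec_nonneg c
  simp only [dotProduct, Matrix.mulVec, Pi.star_apply, star_trivial,
    Finset.mul_sum] at h
  refine le_trans h (le_of_eq ?_)
  refine Finset.sum_congr rfl fun j _ => Finset.sum_congr rfl fun k _ => ?_
  ring

private lemma prod_gram_posSemidef {E : Type*} [NormedAddCommGroup E] [InnerProductSpace ℝ E]
    {ι : Type*} [DecidableEq ι] {m : ℕ} (t : Finset ι) (y : Fin m → ι → E) :
    Matrix.PosSemidef (Matrix.of fun j k => ∏ i ∈ t, (⟪y j i, y k i⟫ : ℝ)) := by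
  induction t using Finset.induction_on with
  | empty =>
    refine Matrix.PosSemidef.of_dotProduct_mulVec_nonneg ?_ ?_
    · ext j k
      simp [Matrix.conjTranspose_apply]
    · intro d
      have h : (0:ℝ) ≤ (∑ j, d j) * (∑ j, d j) := mul_self_nonneg _
      simpa [dotProduct, Matrix.mulVec, Finset.sum_mul] using h
  | @insert a t ha ih =>
    have h2 : (Matrix.of fun j k => ∏ i ∈ insert a t, (⟪y j i, y k i⟫ : ℝ)) =
        Matrix.of fun j k => (Matrix.of fun j k => (⟪y j a, y k a⟫ : ℝ)) j k *
          (Matrix.of fun j k => ∏ i ∈ t, (⟪y j i, y k i⟫ : ℝ)) j k := by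
      ext j k
      simp [Finset.prod_insert ha]
    rw [h2]
    exact schur_posSemidef (gram_posSemidef fun j => y j a) ih

/-- **Tensor powers of an operator bounded below (norm lower bound).**
Let `H` be a separable real Hilbert space and `A` a closed densely defined operator
with domain `D` satisfying `‖Af‖ ≥ ‖f‖` on `D`.  Let `T` be the `n`-fold Hilbert
tensor power of `H` (axiomatized by a multilinear map `tens` whose inner products of
elementary tensors multiply, with total range), `n ≥ 1`, and let `B` be a linear map
on `T` agreeing with `A^{⊗n}` on elementary tensors with entries in `D`.  Then
`‖B f‖ ≥ ‖f‖` for every `f` in the algebraic tensor domain `D^{⊗n}`, i.e. in the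
span of elementary tensors with entries in `D`. -/
theorem tensor_power_norm_lower_bound {H : Type*} [NormedAddCommGroup H]
    [InnerProductSpace ℝ H] [CompleteSpace H] [TopologicalSpace.SeparableSpace H]
    (D : Submodule ℝ H) (hdense : Dense (D : Set H))
    (A : H →ₗ[ℝ] H)
    (hclosed : IsClosed {p : H × H | p.1 ∈ D ∧ p.2 = A p.1})
    (hA : ∀ f ∈ D, ‖f‖ ≤ ‖A f‖)
    (n : ℕ) (hn : 1 ≤ n)
    (T : Type*) [NormedAddCommGroup T] [InnerProductSpace ℝ T]
    (tens : MultilinearMap ℝ (fun _ : Fin n => H) T)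
    (htens : ∀ v w : Fin n → H, ⟪tens v, tens w⟫ = ∏ i, ⟪v i, w i⟫)
    (hspan : Submodule.span ℝ (Set.range tens) = ⊤)
    (B : T →ₗ[ℝ] T)
    (hB : ∀ v : Fin n → H, (∀ i, v i ∈ D) → B (tens v) = tens fun i => A (v i))
    (f : T)
    (hf : f ∈ Submodule.span ℝ {x : T | ∃ v : Fin n → H, (∀ i, v i ∈ D) ∧ x = tens v}) :
    ‖f‖ ≤ ‖B f‖ := by
  rw [Submodule.mem_span_set'] at hf
  obtain ⟨m, c, g, hgf⟩ := hf
  have h2 : ∀ j, ∃ w : Fin n → H, (∀ i, w i ∈ D) ∧ (g j : T) = tens w := fun j => (g j).2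
  choose v hvD hgv using h2
  have hfeq : f = ∑ j, c j • tens (v j) := by
    rw [← hgf]
    exact Finset.sum_congr rfl fun j _ => by rw [hgv j]
  have hBf : B f = ∑ j, c j • tens fun i => A (v j i) := by
    rw [hfeq, map_sum]
    exact Finset.sum_congr rfl fun j _ => by rw [map_smul, hB (v j) (hvD j)]
  -- norm squared formula
  have normsq : ∀ u : Fin m → Fin n → H,
      ‖∑ j, c j • tens (u j)‖ ^ 2 = ∑ j, ∑ k, c j * c k * ∏ i, ⟪u j i, u k i⟫ := by
    intro u
    rw [← real_inner_self_eq_norm_sq, sum_inner]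
    refine Finset.sum_congr rfl fun j _ => ?_
    rw [real_inner_smul_left, inner_sum, Finset.mul_sum]
    refine Finset.sum_congr rfl fun k _ => ?_
    rw [real_inner_smul_right, htens]
    ring
  -- the hybrid monotonicity argument
  have hybrid : ∀ s : Finset (Fin n),
      ∑ j, ∑ k, c j * c k * ∏ i, ⟪v j i, v k i⟫ ≤
      ∑ j, ∑ k, c j * c k *
        ∏ i, ⟪(if i ∈ s then A (v j i) else v j i), (if i ∈ s then A (v k i) else v k i)⟫ := by
    intro s
    induction s using Finset.induction_on with
    | empty => simp
    | @insert a s ha ih =>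
      set xs : Fin m → Fin n → H := fun j i => if i ∈ s then A (v j i) else v j i with hxs
      have hP : ∀ j k, (∏ i, ⟪(if i ∈ insert a s then A (v j i) else v j i),
            (if i ∈ insert a s then A (v k i) else v k i)⟫ : ℝ) =
          ⟪A (v j a), A (v k a)⟫ * ∏ i ∈ Finset.univ.erase a, ⟪xs j i, xs k i⟫ := by
        intro j k
        rw [← Finset.mul_prod_erase Finset.univ _ (Finset.mem_univ a)]
        congr 1
        · simp
        · refine Finset.prod_congr rfl fun i hi => ?_
          have hia : i ≠ a := (Finset.mem_erase.mp hi).1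
          simp [hxs, Finset.mem_insert, hia]
      have hQ : ∀ j k, (∏ i, ⟪(if i ∈ s then A (v j i) else v j i),
            (if i ∈ s then A (v k i) else v k i)⟫ : ℝ) =
          ⟪v j a, v k a⟫ * ∏ i ∈ Finset.univ.erase a, ⟪xs j i, xs k i⟫ := by
        intro j k
        rw [← Finset.mul_prod_erase Finset.univ _ (Finset.mem_univ a)]
        congr 1
        simp [ha]
      -- the PSD difference kernel
      have hKpsd : Matrix.PosSemidef
          ((Matrix.of fun j k => (⟪A (v j a), A (v k a)⟫ : ℝ)) -
            Matrix.of fun j k => (⟪v j a, v k a⟫ : ℝ)) := by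
        refine Matrix.PosSemidef.of_dotProduct_mulVec_nonneg ?_ ?_
        · ext j k
          simp [Matrix.conjTranspose_apply, Matrix.sub_apply, real_inner_comm]
        · intro d
          rw [Matrix.sub_mulVec, dotProduct_sub, dot_gram_aux, dot_gram_aux, sub_nonneg]
          have hu : (∑ j, d j • v j a) ∈ D :=
            Submodule.sum_mem _ fun j _ => Submodule.smul_mem _ _ (hvD j a)
          have h1 := hA _ hu
          have h2 : A (∑ j, d j • v j a) = ∑ j, d j • A (v j a) := by
            rw [map_sum]; exact Finset.sum_congr rfl fun j _ => by rw [map_smul]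
          calc (⟪∑ j, d j • v j a, ∑ j, d j • v j a⟫ : ℝ)
              = ‖∑ j, d j • v j a‖ ^ 2 := real_inner_self_eq_norm_sq _
            _ ≤ ‖A (∑ j, d j • v j a)‖ ^ 2 := by
                have := norm_nonneg (∑ j, d j • v j a)
                nlinarith
            _ = ⟪∑ j, d j • A (v j a), ∑ j, d j • A (v j a)⟫ := by
                rw [← h2, real_inner_self_eq_norm_sq]
      have hPpsd := prod_gram_posSemidef (Finset.univ.erase a) xs
      have hprodpsd := schur_posSemidef hKpsd hPpsd
      have key := psd_sum_nonneg hprodpsd c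
      simp only [Matrix.of_apply, Matrix.sub_apply] at key
      have hdiff : ∑ j, ∑ k, c j * c k *
            ∏ i, ⟪(if i ∈ insert a s then A (v j i) else v j i),
              (if i ∈ insert a s then A (v k i) else v k i)⟫ -
          ∑ j, ∑ k, c j * c k *
            ∏ i, ⟪(if i ∈ s then A (v j i) else v j i), (if i ∈ s then A (v k i) else v k i)⟫ =
          ∑ j, ∑ k, c j * c k *
            ((⟪A (v j a), A (v k a)⟫ - ⟪v j a, v k a⟫) *
              ∏ i ∈ Finset.univ.erase a, ⟪xs j i, xs k i⟫) := by
        rw [← Finset.sum_sub_distrib]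
        refine Finset.sum_congr rfl fun j _ => ?_
        rw [← Finset.sum_sub_distrib]
        refine Finset.sum_congr rfl fun k _ => ?_
        rw [hP j k, hQ j k]
        ring
      linarith [ih, key, hdiff]
  have hyb := hybrid Finset.univ
  simp only [Finset.mem_univ, if_true] at hyb
  have e1 : ‖f‖ ^ 2 = ∑ j, ∑ k, c j * c k * ∏ i, ⟪v j i, v k i⟫ := by
    rw [hfeq]; exact normsq v
  have e2 : ‖B f‖ ^ 2 = ∑ j, ∑ k, c j * c k * ∏ i, ⟪A (v j i), A (v k i)⟫ := by
    rw [hBf]; exact normsq fun j i => A (v j i)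
  have hsq : ‖f‖ ^ 2 ≤ ‖B f‖ ^ 2 := by rw [e1, e2]; exact hyb
  nlinarith [norm_nonneg f, norm_nonneg (B f)]
end
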